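/- arXiv:1306.4647 — 2 statements merged into one kernel-verified Lean document; each statement's English description precedes it below -/
import Mathlib

section
/- Let C₁ and C₂ be isotropic homogeneous elasticity tensors on ℝⁿ (n ≥ 1) with Lamé coefficients (λ₁, μ₁) and (λ₂, μ₂), with μ₁, μ₂ ≥ 0. Then (C₁:ξ):ξ ≤ (C₂:ξ):ξ for every symmetric n×n matrix ξ if and only if nλ₁ + 2μ₁ ≤ nλ₂ + 2μ₂ and μ₁ ≤ μ₂. -/
open Matrix

lemma form_eq {n : ℕ} (lam mu : ℝ) (ξ : Matrix (Fin n) (Fin n) ℝ) :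
    Matrix.trace ((lam • (Matrix.trace ξ) • (1 : Matrix (Fin n) (Fin n) ℝ) + (2 * mu) • ξ) * ξᵀ)
      = lam * (Matrix.trace ξ)^2 + 2 * mu * Matrix.trace (ξ * ξᵀ) := by
  rw [add_mul, Matrix.smul_mul, Matrix.smul_mul, Matrix.smul_mul, Matrix.one_mul,
    Matrix.trace_add, Matrix.trace_smul, Matrix.trace_smul, Matrix.trace_smul,
    Matrix.trace_transpose]
  simp only [smul_eq_mul]; ring

lemma trace_sq_eq {n : ℕ} (ξ : Matrix (Fin n) (Fin n) ℝ) :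
    Matrix.trace (ξ * ξᵀ) = ∑ i, ∑ j, (ξ i j)^2 := by
  simp [Matrix.trace, Matrix.mul_apply, Matrix.diag, sq]

lemma diag_sq_le {n : ℕ} (ξ : Matrix (Fin n) (Fin n) ℝ) :
    (Matrix.trace ξ)^2 ≤ (n : ℝ) * Matrix.trace (ξ * ξᵀ) := by
  rw [trace_sq_eq]
  have h1 : (Matrix.trace ξ)^2 ≤ (n : ℝ) * ∑ i, (ξ i i)^2 := by
    have := sq_sum_le_card_mul_sum_sq (s := (Finset.univ : Finset (Fin n)))
      (f := fun i => ξ i i)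
    simpa [Matrix.trace, Matrix.diag] using this
  refine h1.trans (mul_le_mul_of_nonneg_left ?_ (by positivity))
  exact Finset.sum_le_sum fun i _ =>
    Finset.single_le_sum (f := fun j => (ξ i j)^2) (fun j _ => by positivity)
      (Finset.mem_univ i)

/-- Ordering of two isotropic homogeneous elasticity tensors with Lamé coefficients
`(λ₁, μ₁)` and `(λ₂, μ₂)` (with `μ₁, μ₂ ≥ 0`): the quadratic forms satisfy
`(C₁:ξ):ξ ≤ (C₂:ξ):ξ` for all symmetric `ξ` iff `nλ₁+2μ₁ ≤ nλ₂+2μ₂` and `μ₁ ≤ μ₂`. -/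
theorem isotropic_quadratic_form_le_iff (n : ℕ) (hn : 2 ≤ n)
    (lam₁ mu₁ lam₂ mu₂ : ℝ) (hmu₁ : 0 ≤ mu₁) (hmu₂ : 0 ≤ mu₂) :
    (∀ ξ : Matrix (Fin n) (Fin n) ℝ, ξᵀ = ξ →
      Matrix.trace
        ((lam₁ • (Matrix.trace ξ) • (1 : Matrix (Fin n) (Fin n) ℝ) + (2 * mu₁) • ξ) * ξᵀ)
      ≤ Matrix.trace
        ((lam₂ • (Matrix.trace ξ) • (1 : Matrix (Fin n) (Fin n) ℝ) + (2 * mu₂) • ξ) * ξᵀ))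
    ↔ ((n : ℝ) * lam₁ + 2 * mu₁ ≤ (n : ℝ) * lam₂ + 2 * mu₂ ∧ mu₁ ≤ mu₂) := by
  have hnpos : (0:ℝ) < n := by positivity
  constructor
  · intro h
    constructor
    · -- test ξ = 1
      have h1 := h 1 Matrix.transpose_one
      rw [form_eq, form_eq] at h1
      simp [Matrix.trace_one] at h1
      have hn2 : ((n:ℝ)*lam₁ + 2*mu₁) * n ≤ ((n:ℝ)*lam₂ + 2*mu₂) * n := by nlinarith
      exact le_of_mul_le_mul_right hn2 hnpos
    · -- test traceless diagonal matrix
      set i0 : Fin n := ⟨0, by omega⟩ with hi0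
      set i1 : Fin n := ⟨1, by omega⟩ with hi1
      have h01 : i0 ≠ i1 := by simp [hi0, hi1, Fin.ext_iff]
      obtain ⟨d, hd0, hd1, hdo⟩ : ∃ d : Fin n → ℝ,
          d i0 = 1 ∧ d i1 = -1 ∧ ∀ i, i ≠ i0 → i ≠ i1 → d i = 0 :=
        ⟨fun i => if i = i0 then 1 else if i = i1 then -1 else 0, by simp,
          by simp [Ne.symm h01], fun i h0 h1 => by simp [h0, h1]⟩
      have hpair : ∀ f : Fin n → ℝ, (∀ i, i ≠ i0 → i ≠ i1 → f i = 0) →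
          ∑ i, f i = f i0 + f i1 := by
        intro f hf
        rw [← Finset.sum_pair h01]
        exact (Finset.sum_subset (Finset.subset_univ {i0, i1})
          (fun x _ hx => hf x (fun e => hx (by simp [e])) (fun e => hx (by simp [e])))).symm
      have hsum : ∑ i, d i = 0 := by
        rw [hpair d hdo, hd0, hd1]; ring
      have hsumsq : ∑ i, d i * d i = 2 := by
        rw [hpair (fun i => d i * d i) (fun i h0 h1 => by simp [hdo i h0 h1])]
        simp [hd0, hd1]; norm_num
      have h2 := h (Matrix.diagonal d) (Matrix.diagonal_transpose d)
      rw [form_eq, form_eq] at h2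
      rw [Matrix.trace_diagonal] at h2
      rw [Matrix.diagonal_transpose, Matrix.diagonal_mul_diagonal,
        Matrix.trace_diagonal] at h2
      rw [hsum, hsumsq] at h2
      nlinarith
  · rintro ⟨hl, hm⟩ ξ hξ
    rw [form_eq, form_eq]
    set t := Matrix.trace ξ
    set S := Matrix.trace (ξ * ξᵀ) with hS
    have hS0 : 0 ≤ S := by rw [hS, trace_sq_eq]; positivity
    have htS : t^2 ≤ (n:ℝ) * S := diag_sq_le ξ
    rcases le_or_gt lam₁ lam₂ with hll | hll
    · nlinarith
    · nlinarith [mul_le_mul_of_nonneg_left htS (by linarith : (0:ℝ) ≤ lam₁ - lam₂)]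
end

section
/- If μ > 0, then the quadratic form ξ ↦ (C:ξ):ξ on the space of symmetric n×n matrices is positive definite if and only if nλ + 2μ > 0. -/
/-! The form equals `λ (tr ξ)² + 2μ ‖ξ‖²` with `‖ξ‖² = tr (ξ ξᵀ)`, and Cauchy–Schwarz on the
diagonal gives `(tr ξ)² ≤ n ‖ξ‖²`, with equality at `ξ = 1`. Hence for `λ < 0` the form is at
least `(nλ + 2μ) ‖ξ‖²`, while `ξ = 1` shows that `nλ + 2μ > 0` is necessary. -/

open Matrix

section FrobeniusTrace

variable {m n : Type*} [Fintype m] [Fintype n]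

lemma Matrix.trace_mul_transpose_self_eq_sum_sq (A : Matrix m n ℝ) :
    trace (A * Aᵀ) = ∑ i, ∑ j, A i j ^ 2 := by
  simp only [trace, diag, mul_apply, transpose_apply, sq]

lemma Matrix.trace_mul_transpose_self_pos {A : Matrix m n ℝ} (hA : A ≠ 0) :
    0 < trace (A * Aᵀ) := by
  have hne : trace (A * Aᵀ) ≠ 0 := by
    rw [← conjTranspose_eq_transpose_of_trivial]
    exact trace_mul_conjTranspose_self_eq_zero_iff.not.mpr hA
  have hnonneg : 0 ≤ trace (A * Aᵀ) := by
    rw [trace_mul_transpose_self_eq_sum_sq]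
    positivity
  exact hnonneg.lt_of_ne' hne

lemma Matrix.sq_trace_le_card_mul_trace_mul_transpose_self (A : Matrix n n ℝ) :
    trace A ^ 2 ≤ Fintype.card n * trace (A * Aᵀ) := by
  have hdiag : ∑ i, A i i ^ 2 ≤ trace (A * Aᵀ) := by
    rw [trace_mul_transpose_self_eq_sum_sq]
    exact Finset.sum_le_sum fun i _ =>
      Finset.single_le_sum (f := fun j => A i j ^ 2) (fun _ _ => sq_nonneg _) (Finset.mem_univ i)
  calc trace A ^ 2 ≤ Fintype.card n * ∑ i, A i i ^ 2 := sq_sum_le_card_mul_sum_sq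
    _ ≤ Fintype.card n * trace (A * Aᵀ) := by gcongr

end FrobeniusTrace

lemma trace_isotropic_stress_mul_transpose {n : Type*} [Fintype n] [DecidableEq n]
    (lam mu : ℝ) (ξ : Matrix n n ℝ) :
    trace ((lam • trace ξ • (1 : Matrix n n ℝ) + (2 * mu) • ξ) * ξᵀ)
      = lam * trace ξ ^ 2 + 2 * mu * trace (ξ * ξᵀ) := by
  simp only [add_mul, smul_mul_assoc, one_mul, trace_add, trace_smul, trace_transpose,
    smul_eq_mul]
  ring

theorem isotropic_quadratic_form_posdef_iff_general (n : ℕ) (lam mu : ℝ)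
    (hmu : 0 < mu) :
    (∀ ξ : Matrix (Fin n) (Fin n) ℝ, ξᵀ = ξ → ξ ≠ 0 →
      0 < Matrix.trace
        ((lam • (Matrix.trace ξ) • (1 : Matrix (Fin n) (Fin n) ℝ) + (2 * mu) • ξ) * ξᵀ))
    ↔ 0 < (n : ℝ) * lam + 2 * mu := by
  simp only [trace_isotropic_stress_mul_transpose]
  constructor
  · intro h
    rcases Nat.eq_zero_or_pos n with rfl | hn
    · simpa using hmu
    have : NeZero n := ⟨hn.ne'⟩
    have hI := h 1 transpose_one one_ne_zero
    simp only [trace_one, Fintype.card_fin, transpose_one, mul_one] at hI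
    exact pos_of_mul_pos_right (by linarith : 0 < (n : ℝ) * (n * lam + 2 * mu)) n.cast_nonneg
  · intro h ξ _ hξ
    have hS := trace_mul_transpose_self_pos hξ
    have hCS := sq_trace_le_card_mul_trace_mul_transpose_self ξ
    rw [Fintype.card_fin] at hCS
    rcases le_or_gt 0 lam with hlam | hlam
    · linarith [mul_nonneg hlam (sq_nonneg (trace ξ)), mul_pos hmu hS]
    · calc 0 < (n * lam + 2 * mu) * trace (ξ * ξᵀ) := mul_pos h hS
        _ ≤ lam * trace ξ ^ 2 + 2 * mu * trace (ξ * ξᵀ) := by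
          linarith [mul_le_mul_of_nonpos_left hCS hlam.le]

/-- For `μ > 0`, the isotropic elasticity quadratic form is positive definite on the
space of symmetric `n×n` matrices if and only if `nλ + 2μ > 0`. -/
theorem isotropic_quadratic_form_posdef_iff (n : ℕ) (hn : 1 ≤ n) (lam mu : ℝ)
    (hmu : 0 < mu) :
    (∀ ξ : Matrix (Fin n) (Fin n) ℝ, ξᵀ = ξ → ξ ≠ 0 →
      0 < Matrix.trace
        ((lam • (Matrix.trace ξ) • (1 : Matrix (Fin n) (Fin n) ℝ) + (2 * mu) • ξ) * ξᵀ))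
    ↔ 0 < (n : ℝ) * lam + 2 * mu :=
  isotropic_quadratic_form_posdef_iff_general n lam mu hmu
end
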